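/- arXiv:1209.1706 — 4 statements merged into one kernel-verified Lean document; each statement's English description precedes it below -/
import Mathlib

section
/- For every integer n ≥ 2, the function f_n(β) = sqrt( (1/β) Σ_{j=1}^{n-1} j/(β+j)² ) is integrable on (0,∞), and its integral C(n) = ∫₀^∞ f_n(β) dβ satisfies 0 < C(n) ≤ π · sqrt(n(n−1)/2). In particular, the Jeffreys prior for the Multivariate Ewens Distribution is proper. -/
/-!
Each summand `j / (β + j)²` is at most `j / (β + 1)²`, so
`f_n(β)² ≤ S / (β (β + 1)²)` with `S = Σ_{j=1}^{n-1} j = n(n-1)/2`. Since `2 arctan √β` is an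
antiderivative of `1 / (√β (β + 1))`, the majorant integrates to `π √S` over `(0, ∞)`.
-/

open Real MeasureTheory Filter Set Topology

noncomputable section

/-- The density `f_n`. -/
def medJeffreysDensity (n : ℕ) (β : ℝ) : ℝ :=
  √((1 / β) * ∑ j ∈ Finset.Icc 1 (n - 1), (j : ℝ) / (β + j) ^ 2)

lemma hasDerivAt_two_mul_arctan_sqrt {x : ℝ} (hx : 0 < x) :
    HasDerivAt (fun y => 2 * arctan √y) (√x * (x + 1))⁻¹ x := by
  have h := ((hasDerivAt_arctan √x).comp x (hasDerivAt_sqrt hx.ne')).const_mul 2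
  refine h.congr_deriv ?_
  have hsx : 0 < √x := sqrt_pos.2 hx
  rw [sq_sqrt hx.le]
  field_simp
  ring

lemma tendsto_two_mul_arctan_sqrt_atTop :
    Tendsto (fun y => 2 * arctan √y) atTop (𝓝 π) := by
  have h := ((tendsto_arctan_atTop.mono_right nhdsWithin_le_nhds).comp
    tendsto_sqrt_atTop).const_mul 2
  rwa [mul_div_cancel₀ _ two_ne_zero] at h

lemma integrableOn_inv_sqrt_mul_add_one :
    IntegrableOn (fun x : ℝ => (√x * (x + 1))⁻¹) (Ioi 0) :=
  integrableOn_Ioi_deriv_of_nonneg (by fun_prop) (fun _ hx => hasDerivAt_two_mul_arctan_sqrt hx)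
    (fun x (hx : 0 < x) => by positivity) tendsto_two_mul_arctan_sqrt_atTop

lemma integral_inv_sqrt_mul_add_one :
    ∫ x in Ioi (0 : ℝ), (√x * (x + 1))⁻¹ = π := by
  rw [integral_Ioi_of_hasDerivAt_of_tendsto (by fun_prop)
    (fun _ hx => hasDerivAt_two_mul_arctan_sqrt hx) integrableOn_inv_sqrt_mul_add_one
    tendsto_two_mul_arctan_sqrt_atTop]
  simp

lemma sum_Icc_one_natCast (m : ℕ) : ∑ j ∈ Finset.Icc 1 m, (j : ℝ) = m * (m + 1) / 2 := by
  induction m with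
  | zero => simp
  | succ m ih =>
    rw [Finset.sum_Icc_succ_top (by omega), ih]
    push_cast
    ring

lemma sum_Icc_one_sub_one_natCast (n : ℕ) :
    ∑ j ∈ Finset.Icc 1 (n - 1), (j : ℝ) = n * (n - 1) / 2 := by
  cases n with
  | zero => simp
  | succ m =>
    rw [Nat.add_sub_cancel, sum_Icc_one_natCast]
    push_cast
    ring

namespace medJeffreysDensity

lemma nonneg (n : ℕ) (β : ℝ) : 0 ≤ medJeffreysDensity n β := sqrt_nonneg _

lemma pos {n : ℕ} (hn : 2 ≤ n) {β : ℝ} (hβ : 0 < β) : 0 < medJeffreysDensity n β := by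
  have hone : 1 ∈ Finset.Icc 1 (n - 1) := Finset.mem_Icc.2 ⟨le_rfl, by omega⟩
  exact sqrt_pos.2 (mul_pos (by positivity) (Finset.sum_pos' (fun j _ => by positivity)
    ⟨1, hone, by positivity⟩))

lemma le_sqrt_mul_inv (n : ℕ) {β : ℝ} (hβ : 0 < β) :
    medJeffreysDensity n β ≤ √((n : ℝ) * (n - 1) / 2) * (√β * (β + 1))⁻¹ := by
  have hsum : ∑ j ∈ Finset.Icc 1 (n - 1), (j : ℝ) / (β + j) ^ 2 ≤
      ((n : ℝ) * (n - 1) / 2) / (β + 1) ^ 2 := by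
    rw [← sum_Icc_one_sub_one_natCast, Finset.sum_div]
    refine Finset.sum_le_sum fun j hj => ?_
    have hj : (1 : ℝ) ≤ j := by exact_mod_cast (Finset.mem_Icc.1 hj).1
    gcongr
  calc medJeffreysDensity n β
      ≤ √((1 / β) * (((n : ℝ) * (n - 1) / 2) / (β + 1) ^ 2)) :=
        sqrt_le_sqrt (mul_le_mul_of_nonneg_left hsum (by positivity))
    _ = √(((n : ℝ) * (n - 1) / 2) / (√β * (β + 1)) ^ 2) := by
        rw [mul_pow, sq_sqrt hβ.le, div_mul_div_comm, one_mul, mul_comm β]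
    _ = √((n : ℝ) * (n - 1) / 2) * (√β * (β + 1))⁻¹ := by
        rw [sqrt_div' _ (sq_nonneg _), sqrt_sq (by positivity), div_eq_mul_inv]

lemma measurable (n : ℕ) : Measurable (medJeffreysDensity n) := by
  unfold medJeffreysDensity
  fun_prop

lemma integrableOn_Ioi (n : ℕ) : IntegrableOn (medJeffreysDensity n) (Ioi 0) := by
  refine (integrableOn_inv_sqrt_mul_add_one.const_mul √((n : ℝ) * (n - 1) / 2)).mono'
    (measurable n).aestronglyMeasurable ?_
  filter_upwards [ae_restrict_mem measurableSet_Ioi] with β hβ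
  rw [norm_of_nonneg (nonneg n β)]
  exact le_sqrt_mul_inv n hβ

lemma integral_Ioi_pos {n : ℕ} (hn : 2 ≤ n) : 0 < ∫ β in Ioi 0, medJeffreysDensity n β := by
  rw [setIntegral_pos_iff_support_of_nonneg_ae (ae_of_all _ (nonneg n)) (integrableOn_Ioi n)]
  have hsupp : Function.support (medJeffreysDensity n) ∩ Ioi 0 = Ioi 0 :=
    inter_eq_right.2 fun β hβ => (pos hn hβ).ne'
  simp [hsupp]

lemma integral_Ioi_le (n : ℕ) :
    ∫ β in Ioi 0, medJeffreysDensity n β ≤ π * √((n : ℝ) * (n - 1) / 2) := calc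
  ∫ β in Ioi 0, medJeffreysDensity n β
      ≤ ∫ β in Ioi 0, √((n : ℝ) * (n - 1) / 2) * (√β * (β + 1))⁻¹ :=
        setIntegral_mono_on (integrableOn_Ioi n) (integrableOn_inv_sqrt_mul_add_one.const_mul _)
          measurableSet_Ioi fun _ hβ => le_sqrt_mul_inv n hβ
  _ = π * √((n : ℝ) * (n - 1) / 2) := by
        rw [integral_const_mul, integral_inv_sqrt_mul_add_one, mul_comm]

end medJeffreysDensity

end

/-- The Jeffreys prior for the Multivariate Ewens Distribution is proper: for `n ≥ 2`,
`f_n(β) = sqrt( (1/β) Σ_{j=1}^{n-1} j/(β+j)² )` is integrable on `(0,∞)` and its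
integral `C(n)` satisfies `0 < C(n) ≤ π·sqrt(n(n−1)/2)`. -/
theorem med_jeffreys_prior_proper (n : ℕ) (hn : 2 ≤ n) :
    IntegrableOn
        (fun β : ℝ => Real.sqrt ((1 / β) * ∑ j ∈ Finset.Icc 1 (n - 1), (j : ℝ) / (β + j) ^ 2))
        (Set.Ioi 0) ∧
      0 < (∫ β in Set.Ioi (0 : ℝ),
            Real.sqrt ((1 / β) * ∑ j ∈ Finset.Icc 1 (n - 1), (j : ℝ) / (β + j) ^ 2)) ∧
      (∫ β in Set.Ioi (0 : ℝ),
            Real.sqrt ((1 / β) * ∑ j ∈ Finset.Icc 1 (n - 1), (j : ℝ) / (β + j) ^ 2)) ≤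
        π * Real.sqrt ((n : ℝ) * ((n : ℝ) - 1) / 2) :=
  ⟨medJeffreysDensity.integrableOn_Ioi n, medJeffreysDensity.integral_Ioi_pos hn,
    medJeffreysDensity.integral_Ioi_le n⟩
end

section
/- For every integer n ≥ 2 and every real β > 0, the strict inequality 3(Σ_{j=1}^{n-1} j/(β+j)⁴)(Σ_{j=1}^{n-1} j/(β+j)²) > 2(Σ_{j=1}^{n-1} j/(β+j)³)² holds. -/
/-! Cauchy–Schwarz alone gives `(Σ j/(β+j)³)² ≤ (Σ j/(β+j)⁴)(Σ j/(β+j)²)`, and the right-hand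
side is positive, so the factor `3/2` is pure slack. -/

open Finset

theorem sq_sum_div_pow_succ_le {ι K : Type*} [Field K] [LinearOrder K] [IsStrictOrderedRing K]
    (s : Finset ι) (w x : ι → K) (hw : ∀ i ∈ s, 0 ≤ w i) (hx : ∀ i ∈ s, 0 ≤ x i) (k : ℕ) :
    (∑ i ∈ s, w i / x i ^ (k + 1)) ^ 2 ≤
      (∑ i ∈ s, w i / x i ^ (k + 2)) * ∑ i ∈ s, w i / x i ^ k :=
  sum_sq_le_sum_mul_sum_of_sq_le_mul s
    (fun i hi => div_nonneg (hw i hi) (pow_nonneg (hx i hi) _))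
    (fun i hi => div_nonneg (hw i hi) (pow_nonneg (hx i hi) _))
    (fun i _ => le_of_eq (by ring))

/-- Key inequality for the log-convexity of the MED Jeffreys prior:
`3(Σ j/(β+j)⁴)(Σ j/(β+j)²) > 2(Σ j/(β+j)³)²`. -/
theorem med_logconvexity_inequality (n : ℕ) (hn : 2 ≤ n) (β : ℝ) (hβ : 0 < β) :
    2 * (∑ j ∈ Finset.Icc 1 (n - 1), (j : ℝ) / (β + j) ^ 3) ^ 2 <
      3 * (∑ j ∈ Finset.Icc 1 (n - 1), (j : ℝ) / (β + j) ^ 4) *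
        (∑ j ∈ Finset.Icc 1 (n - 1), (j : ℝ) / (β + j) ^ 2) := by
  have hpos : ∀ k : ℕ, 0 < ∑ j ∈ Icc 1 (n - 1), (j : ℝ) / (β + j) ^ k := fun k =>
    sum_pos' (fun j _ => by positivity) ⟨1, mem_Icc.mpr ⟨le_rfl, by omega⟩, by positivity⟩
  have hCS := sq_sum_div_pow_succ_le (Icc 1 (n - 1)) (fun j => (j : ℝ)) (fun j => β + j)
    (fun j _ => j.cast_nonneg) (fun j _ => by positivity) 2
  linarith [mul_pos (hpos 4) (hpos 2)]
end

section
/- For every integer n ≥ 2, the function f_n(β) = sqrt( (1/β) Σ_{j=1}^{n-1} j/(β+j)² ) is log-convex on (0,∞); that is, the function β ↦ log f_n(β) is convex on (0,∞). -/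
/-!
Up to the factor `1/2`, `log f_n(β) = log S(β) - log β` with `S(β) = Σ j/(β+j)²`. Since `log` is
concave, `-log β` is convex. Each term of `S` is log-convex, as `log (j/(β+j)²) = log j - 2 log(β+j)`,
and a sum of log-convex functions is log-convex by Hölder's inequality: if
`g_i(a x + b y) ≤ g_i(x)^a g_i(y)^b`, then summing over `i` and applying Hölder with exponents
`1/a`, `1/b` gives the same inequality for `Σ g_i`.
-/

open Finset Real

theorem Finset.sum_rpow_mul_rpow_le {ι : Type*} (s : Finset ι) {u v : ι → ℝ}
    (hu : ∀ i ∈ s, 0 ≤ u i) (hv : ∀ i ∈ s, 0 ≤ v i) {a b : ℝ} (ha : 0 < a) (hb : 0 < b)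
    (hab : a + b = 1) :
    ∑ i ∈ s, u i ^ a * v i ^ b ≤ (∑ i ∈ s, u i) ^ a * (∑ i ∈ s, v i) ^ b := by
  have holder := inner_le_Lp_mul_Lq_of_nonneg s (holderConjugate_one_div ha hb hab)
    (fun i hi => rpow_nonneg (hu i hi) a) (fun i hi => rpow_nonneg (hv i hi) b)
  simp only [one_div, inv_inv] at holder
  rwa [sum_congr rfl fun i hi => rpow_rpow_inv (hu i hi) ha.ne',
    sum_congr rfl fun i hi => rpow_rpow_inv (hv i hi) hb.ne'] at holder

theorem ConvexOn.log_sum {E ι : Type*} [AddCommGroup E] [Module ℝ E] {s : Set E}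
    {t : Finset ι} {g : ι → E → ℝ} (hpos : ∀ i ∈ t, ∀ x ∈ s, 0 < g i x)
    (hlog : ∀ i ∈ t, ConvexOn ℝ s fun x => log (g i x)) (ht : t.Nonempty) :
    ConvexOn ℝ s fun x => log (∑ i ∈ t, g i x) := by
  obtain ⟨i₀, hi₀⟩ := ht
  have hs : Convex ℝ s := (hlog i₀ hi₀).1
  have hsum_pos : ∀ x ∈ s, 0 < ∑ i ∈ t, g i x := fun x hx =>
    sum_pos (fun i hi => hpos i hi x hx) ⟨i₀, hi₀⟩
  refine convexOn_iff_forall_pos.mpr ⟨hs, fun x hx y hy a b ha hb hab => ?_⟩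
  have hz : a • x + b • y ∈ s := hs hx hy ha.le hb.le hab
  have hterm : ∀ i ∈ t, g i (a • x + b • y) ≤ g i x ^ a * g i y ^ b := by
    intro i hi
    have hx' := hpos i hi x hx
    have hy' := hpos i hi y hy
    rw [← log_le_log_iff (hpos i hi _ hz) (by positivity),
      log_mul (rpow_pos_of_pos hx' a).ne' (rpow_pos_of_pos hy' b).ne', log_rpow hx', log_rpow hy']
    exact (hlog i hi).2 hx hy ha.le hb.le hab
  have hSx := hsum_pos x hx
  have hSy := hsum_pos y hy
  calc log (∑ i ∈ t, g i (a • x + b • y))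
      ≤ log ((∑ i ∈ t, g i x) ^ a * (∑ i ∈ t, g i y) ^ b) :=
        log_le_log (hsum_pos _ hz) <| (sum_le_sum hterm).trans <|
          sum_rpow_mul_rpow_le t (fun i hi => (hpos i hi x hx).le)
            (fun i hi => (hpos i hi y hy).le) ha hb hab
    _ = a • log (∑ i ∈ t, g i x) + b • log (∑ i ∈ t, g i y) := by
        rw [log_mul (rpow_pos_of_pos hSx a).ne' (rpow_pos_of_pos hSy b).ne', log_rpow hSx,
          log_rpow hSy]
        rfl

theorem convexOn_log_div_add_pow (c : ℝ) {d : ℝ} (hd : 0 < d) (k : ℕ) :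
    ConvexOn ℝ (Set.Ioi (-c)) fun β => log (d / (β + c) ^ k) := by
  have hneglog : ConvexOn ℝ (Set.Ioi (-c)) fun β => -log (β + c) := by
    have hlog := strictConcaveOn_log_Ioi.concaveOn.translate_left c
    rw [Set.preimage_const_add_Ioi, zero_sub] at hlog
    exact hlog.neg
  refine ((hneglog.smul k.cast_nonneg).add_const (log d)).congr fun β hβ => ?_
  have hβc : 0 < β + c := neg_lt_iff_pos_add.mp hβ
  simp only [Pi.add_apply, smul_eq_mul]
  rw [log_div hd.ne' (by positivity), log_pow]
  ring

/-- The Jeffreys prior density for the MED,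
`f_n(β) = sqrt( (1/β) Σ_{j=1}^{n-1} j/(β+j)² )`, is log-convex on `(0,∞)`:
`β ↦ log f_n(β)` is convex on `(0,∞)`. -/
theorem med_jeffreys_log_convex (n : ℕ) (hn : 2 ≤ n) :
    ConvexOn ℝ (Set.Ioi 0)
      (fun β : ℝ =>
        Real.log (Real.sqrt ((1 / β) * ∑ j ∈ Finset.Icc 1 (n - 1), (j : ℝ) / (β + j) ^ 2))) := by
  have hj_pos : ∀ j ∈ Icc 1 (n - 1), (0 : ℝ) < j := fun j hj => by
    exact_mod_cast (mem_Icc.mp hj).1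
  have hterm_pos : ∀ j ∈ Icc 1 (n - 1), ∀ β ∈ Set.Ioi (0 : ℝ), 0 < (j : ℝ) / (β + j) ^ 2 :=
    fun j hj β (hβ : 0 < β) => by have := hj_pos j hj; positivity
  have hone : 1 ∈ Icc 1 (n - 1) := mem_Icc.mpr ⟨le_rfl, by omega⟩
  have hlogS : ConvexOn ℝ (Set.Ioi 0)
      fun β => log (∑ j ∈ Icc 1 (n - 1), (j : ℝ) / (β + j) ^ 2) :=
    ConvexOn.log_sum hterm_pos (fun j hj => (convexOn_log_div_add_pow _ (hj_pos j hj) 2).subset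
      (Set.Ioi_subset_Ioi (neg_nonpos.mpr (hj_pos j hj).le)) (convex_Ioi 0)) ⟨1, hone⟩
  refine ((hlogS.sub strictConcaveOn_log_Ioi.concaveOn).smul (by norm_num : (0 : ℝ) ≤ 1 / 2)).congr
    fun β (hβ : 0 < β) => ?_
  have hS : 0 < ∑ j ∈ Icc 1 (n - 1), (j : ℝ) / (β + j) ^ 2 :=
    sum_pos (fun j hj => hterm_pos j hj β hβ) ⟨1, hone⟩
  rw [log_sqrt (by positivity), log_mul (by positivity) hS.ne', one_div β, log_inv]
  simp only [Pi.sub_apply, smul_eq_mul]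
  ring
end

section
/- For every integer n ≥ 2 and every real s ≥ 1, the integral ∫₀^∞ β^s · sqrt( (1/β) Σ_{j=1}^{n-1} j/(β+j)² ) dβ diverges (equals +∞). In particular, the Jeffreys prior for the Multivariate Ewens Distribution has no finite moments. -/
/-!
On `(1, ∞)` keep only the `j = 1` term of the sum and use `β ≤ β ^ s`: the integrand is then at
least `√β / (β + 1) ≥ β ^ (-1/2) / 2`, whose integral over `(1, ∞)` diverges.
-/

open MeasureTheory
open scoped ENNReal

noncomputable def medJeffreys (n : ℕ) (β : ℝ) : ℝ :=
  Real.sqrt ((1 / β) * ∑ j ∈ Finset.Icc 1 (n - 1), (j : ℝ) / (β + j) ^ 2)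

lemma lintegral_Ioi_const_mul_rpow_eq_top {c r t : ℝ} (hc : 0 < c) (hr : -1 ≤ r) (ht : 0 < t) :
    ∫⁻ x in Set.Ioi t, ENNReal.ofReal (c * x ^ r) = ⊤ := by
  have hnonneg : 0 ≤ᵐ[volume.restrict (Set.Ioi t)] fun x : ℝ ↦ c * x ^ r := by
    filter_upwards [ae_restrict_mem measurableSet_Ioi] with x hx
    have : 0 < x := ht.trans hx
    positivity
  by_contra hfin
  rw [← ne_eq, lintegral_ofReal_ne_top_iff_integrable (by fun_prop) hnonneg] at hfin
  have hrpow : Integrable (fun x : ℝ ↦ x ^ r) (volume.restrict (Set.Ioi t)) := by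
    simpa [← mul_assoc, inv_mul_cancel₀ hc.ne'] using hfin.const_mul c⁻¹
  exact absurd ((integrableOn_Ioi_rpow_iff ht).1 hrpow) (not_lt.2 hr)

lemma one_div_add_one_sq_le_sum {n : ℕ} (hn : 2 ≤ n) (β : ℝ) :
    1 / (β + 1) ^ 2 ≤ ∑ j ∈ Finset.Icc 1 (n - 1), (j : ℝ) / (β + j) ^ 2 := by
  have hmem : 1 ∈ Finset.Icc 1 (n - 1) := Finset.mem_Icc.2 ⟨le_rfl, by omega⟩
  calc 1 / (β + 1) ^ 2 = ((1 : ℕ) : ℝ) / (β + (1 : ℕ)) ^ 2 := by norm_num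
    _ ≤ _ := Finset.single_le_sum (f := fun j : ℕ ↦ (j : ℝ) / (β + j) ^ 2)
      (fun j _ ↦ by positivity) hmem

lemma one_div_sqrt_mul_add_one_le_medJeffreys {n : ℕ} (hn : 2 ≤ n) {β : ℝ} (hβ : 0 < β) :
    1 / (√β * (β + 1)) ≤ medJeffreys n β := by
  have hsq : (1 / (√β * (β + 1))) ^ 2 = 1 / β * (1 / (β + 1) ^ 2) := by
    rw [div_pow, mul_pow, Real.sq_sqrt hβ.le]
    field_simp
  rw [medJeffreys, ← Real.sqrt_sq (by positivity : 0 ≤ 1 / (√β * (β + 1))), hsq]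
  gcongr
  exact one_div_add_one_sq_le_sum hn β

lemma inv_two_mul_rpow_neg_half_le {β : ℝ} (hβ : 1 ≤ β) :
    2⁻¹ * β ^ (-(1 / 2) : ℝ) ≤ β * (1 / (√β * (β + 1))) := by
  have hβ0 : 0 < β := one_pos.trans_le hβ
  rw [Real.rpow_neg hβ0.le, ← Real.sqrt_eq_rpow]
  field_simp
  nlinarith [Real.mul_self_sqrt hβ0.le]

lemma inv_two_mul_rpow_neg_half_le_rpow_mul_medJeffreys {n : ℕ} (hn : 2 ≤ n) {s : ℝ}
    (hs : 1 ≤ s) {β : ℝ} (hβ : 1 ≤ β) :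
    2⁻¹ * β ^ (-(1 / 2) : ℝ) ≤ β ^ s * medJeffreys n β := by
  have hβ0 : 0 < β := one_pos.trans_le hβ
  have hβs : β ≤ β ^ s := by
    simpa using Real.rpow_le_rpow_of_exponent_le hβ hs
  calc 2⁻¹ * β ^ (-(1 / 2) : ℝ) ≤ β * (1 / (√β * (β + 1))) := inv_two_mul_rpow_neg_half_le hβ
    _ ≤ β ^ s * medJeffreys n β :=
      mul_le_mul hβs (one_div_sqrt_mul_add_one_le_medJeffreys hn hβ0) (by positivity)
        (hβ0.le.trans hβs)

/-- The Jeffreys prior for the MED has no finite moments: for every `n ≥ 2` and `s ≥ 1`,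
`∫₀^∞ β^s · sqrt( (1/β) Σ_{j=1}^{n-1} j/(β+j)² ) dβ = +∞`. -/
theorem med_jeffreys_no_moments (n : ℕ) (hn : 2 ≤ n) (s : ℝ) (hs : 1 ≤ s) :
    ∫⁻ β in Set.Ioi (0 : ℝ),
        ENNReal.ofReal
          (β ^ s *
            Real.sqrt ((1 / β) * ∑ j ∈ Finset.Icc 1 (n - 1), (j : ℝ) / (β + j) ^ 2)) = ⊤ := by
  change ∫⁻ β in Set.Ioi (0 : ℝ), ENNReal.ofReal (β ^ s * medJeffreys n β) = ⊤
  rw [eq_top_iff]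
  calc ⊤ = ∫⁻ β in Set.Ioi (1 : ℝ), ENNReal.ofReal (2⁻¹ * β ^ (-(1 / 2) : ℝ)) :=
        (lintegral_Ioi_const_mul_rpow_eq_top (by norm_num) (by norm_num) one_pos).symm
    _ ≤ ∫⁻ β in Set.Ioi (1 : ℝ), ENNReal.ofReal (β ^ s * medJeffreys n β) :=
        setLIntegral_mono (by unfold medJeffreys; fun_prop) fun β hβ ↦
          ENNReal.ofReal_le_ofReal
            (inv_two_mul_rpow_neg_half_le_rpow_mul_medJeffreys hn hs (le_of_lt hβ))
    _ ≤ ∫⁻ β in Set.Ioi (0 : ℝ), ENNReal.ofReal (β ^ s * medJeffreys n β) :=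
        lintegral_mono_set (Set.Ioi_subset_Ioi zero_le_one)
end
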